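/- In dimension d = 1, for a = -V' with V smooth and exp(-(2/σ²)V) integrable with appropriate decay, the function B(x) = (1/2)[a(x)a'(x)u'(x) + (σ²/2)a'(x)u''(x) + (σ²/2)a''(x)u'(x)] satisfies ∫_ℝ B(x) e^{-(2/σ²)V(x)} dx = 0 for every smooth u of polynomial growth with polynomially growing derivatives. -/

import Mathlib

open MeasureTheory Real Filter

/-- The one-dimensional leading error coefficient of the non-Markovian scheme. -/
noncomputable def Bcoef1 (σ : ℝ) (a u : ℝ → ℝ) (x : ℝ) : ℝ :=
  (1 / 2) * (a x * deriv a x * deriv u x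
    + σ ^ 2 / 2 * deriv a x * deriv (deriv u) x
    + σ ^ 2 / 2 * deriv (deriv a) x * deriv u x)

theorem gibbs_average_of_B_vanishes_dim1
    (σ : ℝ) (hσ : 0 < σ)
    (V : ℝ → ℝ) (hV : ContDiff ℝ (⊤ : ℕ∞) V)
    (a : ℝ → ℝ) (ha : ∀ x, a x = -deriv V x)
    (hweight : Integrable (fun x => Real.exp (-(2 / σ ^ 2) * V x))) :
    ∀ u : ℝ → ℝ, ContDiff ℝ (⊤ : ℕ∞) u →
      (∃ C : ℝ, ∃ n : ℕ, ∀ x,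
        |u x| + |deriv u x| + |deriv (deriv u) x| ≤ C * (1 + |x|) ^ n) →
      Integrable (fun x => Bcoef1 σ a u x * Real.exp (-(2 / σ ^ 2) * V x)) →
      Integrable (fun x => a x * deriv u x * Real.exp (-(2 / σ ^ 2) * V x)) →
      Integrable (fun x => deriv a x * deriv u x * Real.exp (-(2 / σ ^ 2) * V x)) →
      Integrable (fun x => a x * deriv (deriv u) x * Real.exp (-(2 / σ ^ 2) * V x)) →
      (Tendsto (fun x => a x * deriv u x * Real.exp (-(2 / σ ^ 2) * V x)) atTop (nhds 0)) →
      (Tendsto (fun x => a x * deriv u x * Real.exp (-(2 / σ ^ 2) * V x)) atBot (nhds 0)) →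
      (Tendsto (fun x => deriv a x * deriv u x * Real.exp (-(2 / σ ^ 2) * V x)) atTop (nhds 0)) →
      (Tendsto (fun x => deriv a x * deriv u x * Real.exp (-(2 / σ ^ 2) * V x)) atBot (nhds 0)) →
      (Tendsto (fun x => a x * deriv (deriv u) x * Real.exp (-(2 / σ ^ 2) * V x)) atTop (nhds 0)) →
      (Tendsto (fun x => a x * deriv (deriv u) x * Real.exp (-(2 / σ ^ 2) * V x)) atBot (nhds 0)) →
      ∫ x, Bcoef1 σ a u x * Real.exp (-(2 / σ ^ 2) * V x) = 0 := by
  intro u hu hpoly hgint h1int h2int h3int t1 t1' t3 t3' t5 t5'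
  have haf : a = fun x => -deriv V x := funext ha
  subst haf
  have hσ2 : σ ^ 2 ≠ 0 := by positivity
  have hV1 : Differentiable ℝ V := hV.differentiable (by simp)
  have hVi : ContDiff ℝ (⊤ : ℕ∞) V := hV.of_le (by simp)
  have hW : ContDiff ℝ (⊤ : ℕ∞) (deriv V) := (contDiff_infty_iff_deriv.mp hVi).2
  have hW1 : Differentiable ℝ (deriv V) := hW.differentiable (by simp)
  have hW2 : ContDiff ℝ (⊤ : ℕ∞) (deriv (deriv V)) := (contDiff_infty_iff_deriv.mp hW).2
  have hW21 : Differentiable ℝ (deriv (deriv V)) := hW2.differentiable (by simp)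
  have hui : ContDiff ℝ (⊤ : ℕ∞) u := hu.of_le (by simp)
  have hu' : ContDiff ℝ (⊤ : ℕ∞) (deriv u) := (contDiff_infty_iff_deriv.mp hui).2
  have hu'1 : Differentiable ℝ (deriv u) := hu'.differentiable (by simp)
  set E : ℝ → ℝ := fun x => Real.exp (-(2 / σ ^ 2) * V x) with hE
  set F : ℝ → ℝ := fun x => σ ^ 2 / 4 * (deriv (fun y => -deriv V y) x * deriv u x * E x)
    with hF
  have hda : (deriv fun y => -deriv V y) = fun x => -deriv (deriv V) x := by
    funext x; simp
  have key : ∀ x : ℝ, HasDerivAt F (Bcoef1 σ (fun y => -deriv V y) u x * E x) x := by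
    intro x
    have hVd : HasDerivAt V (deriv V x) x := (hV1 x).hasDerivAt
    have hW2d : HasDerivAt (deriv (deriv V)) (deriv (deriv (deriv V)) x) x :=
      (hW21 x).hasDerivAt
    have hud : HasDerivAt (deriv u) (deriv (deriv u) x) x := (hu'1 x).hasDerivAt
    have hEd : HasDerivAt E ((-(2 / σ ^ 2) * deriv V x) * E x) x := by
      have h0 := (hVd.const_mul (-(2 / σ ^ 2))).exp
      convert h0 using 1
      simp only [hE]; ring
    have hdad : HasDerivAt (deriv fun y => -deriv V y) (-deriv (deriv (deriv V)) x) x := by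
      rw [hda]; exact hW2d.neg
    have h := ((hdad.mul hud).mul hEd).const_mul (σ ^ 2 / 4)
    refine h.congr_deriv ?_
    have hdda : deriv (deriv fun y => -deriv V y) x = -deriv (deriv (deriv V)) x := by
      rw [hda]; simp
    simp only [Bcoef1, hda, hdda, Pi.mul_apply, deriv.fun_neg']
    field_simp
    ring
  have hcont : ∀ x : ℝ, ContinuousAt F x := fun x => (key x).continuousAt
  have hTtop : Tendsto F atTop (nhds 0) := by
    have := t3.const_mul (σ ^ 2 / 4)
    simpa [hF, hE, mul_assoc] using this
  have hTbot : Tendsto F atBot (nhds 0) := by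
    have := t3'.const_mul (σ ^ 2 / 4)
    simpa [hF, hE, mul_assoc] using this
  have hIoi : ∫ x in Set.Ioi (0 : ℝ), Bcoef1 σ (fun y => -deriv V y) u x * E x = 0 - F 0 :=
    integral_Ioi_of_hasDerivAt_of_tendsto (hcont 0).continuousWithinAt
      (fun x _ => key x) hgint.integrableOn hTtop
  have hIic : ∫ x in Set.Iic (0 : ℝ), Bcoef1 σ (fun y => -deriv V y) u x * E x = F 0 - 0 :=
    integral_Iic_of_hasDerivAt_of_tendsto (hcont 0).continuousWithinAt
      (fun x _ => key x) hgint.integrableOn hTbot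
  have htot := intervalIntegral.integral_Iic_add_Ioi (b := (0 : ℝ))
    (f := fun x => Bcoef1 σ (fun y => -deriv V y) u x * E x)
    hgint.integrableOn hgint.integrableOn
  rw [← htot, hIoi, hIic]
  ring
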